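/- arXiv:1512.06025 — 3 statements merged into one kernel-verified Lean document; each statement's English description precedes it below -/
import Mathlib

section
/- Row sparsity of the matrix L_0 core: let d ≥ 1 and N ≥ 0, and consider the matrix (E^{N+1}_N)ᵀ E^{N+1}_N, indexed by pairs of multi-indices β, β' : Fin (d+1) → ℕ of weight N. Its entry at (β, β') is nonzero only if β' = β or β' = β − e_j + e_k for some j ≠ k with β_j ≥ 1; consequently every row has at most 1 + d(d+1) nonzero entries, independent of N (for d = 2, i.e. triangular faces, at most 7 nonzero entries per row). -/
/-- Entry `(β, α)` of the one-degree elevation matrix `E^m_{m−1}` for multi-indices over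
`Fin n`: it equals `(α_j + 1)/m` if `β = α + e_j` for some `j`, and `0` otherwise. -/
def elevEntry (n m : ℕ) (β α : Fin n → ℕ) : ℚ :=
  ∑ j, if β = α + Pi.single j 1 then ((α j : ℚ) + 1) / (m : ℚ) else 0

/-- Entry `(β, β')` of the matrix `(E^{N+1}_N)ᵀ E^{N+1}_N` for multi-indices of weight `N`
over `Fin (d+1)`: the sum over all multi-indices `γ` of weight `N+1` of
`(E^{N+1}_N)_{γ,β} (E^{N+1}_N)_{γ,β'}`. -/
def L0core (d N : ℕ) (β β' : Fin (d + 1) → ℕ) : ℚ :=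
  ∑ γ ∈ Finset.Nat.antidiagonalTuple (d + 1) (N + 1),
    elevEntry (d + 1) (N + 1) γ β * elevEntry (d + 1) (N + 1) γ β'

lemma elev_ne {n m : ℕ} {γ β : Fin n → ℕ} (h : elevEntry n m γ β ≠ 0) :
    ∃ j, γ = β + Pi.single j 1 := by
  by_contra hc
  push_neg at hc
  exact h (Finset.sum_eq_zero fun j _ => by rw [if_neg (hc j)])

/-- Row sparsity of the matrix `(E^{N+1}_N)ᵀ E^{N+1}_N`, indexed by pairs of multi-indices
`β, β'` of weight `N` over `Fin (d+1)` (`d ≥ 1`).  Its entry at `(β, β')` is nonzero only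
if `β' = β` or `β' = β − e_j + e_k` for some `j ≠ k` with `β_j ≥ 1`; consequently every row
has at most `1 + d(d+1)` nonzero entries, independent of `N`. -/
theorem stmt4 (d N : ℕ) (hd : 1 ≤ d) (β : Fin (d + 1) → ℕ) (hβ : ∑ j, β j = N) :
    (∀ β' : Fin (d + 1) → ℕ, (∑ j, β' j) = N → L0core d N β β' ≠ 0 →
      β' = β ∨ ∃ j k : Fin (d + 1), j ≠ k ∧ 1 ≤ β j ∧
        β' = β - Pi.single j 1 + Pi.single k 1)
    ∧ {β' : Fin (d + 1) → ℕ | (∑ j, β' j) = N ∧ L0core d N β β' ≠ 0}.ncard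
        ≤ 1 + d * (d + 1) := by
  classical
  have key : ∀ β' : Fin (d + 1) → ℕ, L0core d N β β' ≠ 0 →
      β' = β ∨ ∃ j k : Fin (d + 1), j ≠ k ∧ 1 ≤ β j ∧
        β' = β - Pi.single j 1 + Pi.single k 1 := by
    intro β' h
    obtain ⟨γ, -, hγ⟩ := Finset.exists_ne_zero_of_sum_ne_zero h
    obtain ⟨j, hj⟩ := elev_ne (left_ne_zero_of_mul hγ)
    obtain ⟨k, hk⟩ := elev_ne (right_ne_zero_of_mul hγ)
    have heq : β + Pi.single j 1 = β' + Pi.single k 1 := hj.symm.trans hk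
    by_cases hjk : j = k
    · left
      subst hjk
      exact (add_right_cancel heq).symm
    · right
      refine ⟨k, j, Ne.symm hjk, ?_, ?_⟩
      · have hi := congrFun heq k
        simp only [Pi.add_apply, Pi.single_apply] at hi
        rw [if_neg (Ne.symm hjk)] at hi
        simp at hi
        omega
      · funext i
        have hi := congrFun heq i
        simp only [Pi.add_apply, Pi.sub_apply, Pi.single_apply] at hi ⊢
        have hk' := congrFun heq k
        simp only [Pi.add_apply, Pi.single_apply] at hk'
        rw [if_neg (Ne.symm hjk)] at hk'
        simp at hk'
        split_ifs at hi ⊢ <;> omega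
  refine ⟨fun β' _ h => key β' h, ?_⟩
  set f : Fin (d + 1) × Fin (d + 1) → (Fin (d + 1) → ℕ) :=
    fun p => β - Pi.single p.1 1 + Pi.single p.2 1 with hf
  have hsub : {β' | (∑ j, β' j) = N ∧ L0core d N β β' ≠ 0} ⊆
      ↑(insert β ((Finset.univ.offDiag).image f)) := by
    rintro β' ⟨-, h⟩
    rcases key β' h with h | ⟨j, k, hjk, -, hβ'⟩
    · simp [h]
    · simp only [Finset.coe_insert, Set.mem_insert_iff, Finset.coe_image,
        Set.mem_image, Finset.mem_coe]
      exact Or.inr ⟨(j, k), by simp [Finset.mem_offDiag, hjk], hβ'.symm⟩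
  calc {β' | (∑ j, β' j) = N ∧ L0core d N β β' ≠ 0}.ncard
      ≤ (insert β ((Finset.univ.offDiag).image f)).card := by
        rw [← Set.ncard_coe_finset]
        exact Set.ncard_le_ncard hsub (Finset.finite_toSet _)
    _ ≤ (Finset.univ.offDiag.image f).card + 1 := Finset.card_insert_le _ _
    _ ≤ Finset.univ.offDiag.card + 1 := by gcongr; exact Finset.card_image_le
    _ ≤ 1 + d * (d + 1) := by
        rw [Finset.offDiag_card, Finset.card_univ, Fintype.card_fin, Nat.succ_mul]
        omega
end

section
/- Degree reduction restricts mass matrices: let d ≥ 1, N ≥ 0 and 0 ≤ i, j ≤ N. For all multi-indices α of weight N−i and β of weight N−j, ∫_{T_d} b^{N−i}_α(x) b^{N−j}_β(x) dx = ((E^N_{N−i})ᵀ M^N E^N_{N−j})_{α,β}, i.e., the cross mass matrix between degrees N−i and N−j equals the degree-N mass matrix conjugated by degree elevation operators. -/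
/-!
A Bernstein polynomial of degree `N - i` is pointwise a combination of those of degree `N`,
with coefficients the column of `E^N_{N-i}`: one elevation step multiplies `b^m_α` by
`∑_j λ_j = 1` and uses `λ_j b^m_α = (α_j + 1)/(m + 1) · b^{m+1}_{α + e_j}`. Substituting both
expansions into the integrand, bilinearity of the integral yields
`((E^N_{N-i})ᵀ M^N E^N_{N-j})_{α,β}`.
-/

open MeasureTheory

/-- The unit `n`-simplex `T_n = {x ∈ ℝ^n : x_i ≥ 0, Σ x_i ≤ 1}`. -/
def unitSimplex (n : ℕ) : Set (Fin n → ℝ) := {x | (∀ i, 0 ≤ x i) ∧ ∑ i, x i ≤ 1}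

/-- Barycentric coordinates `λ(x) = (x_1, …, x_n, 1 − Σ_i x_i)` of `x ∈ ℝ^n`. -/
noncomputable def bary (n : ℕ) (x : Fin n → ℝ) : Fin (n + 1) → ℝ :=
  Fin.snoc x (1 - ∑ i, x i)

/-- The Bernstein basis function `b^N_α(x) = (N!/∏_j α_j!) · ∏_j λ(x)_j^{α_j}` on `ℝ^n`,
for a multi-index `α : Fin (n+1) → ℕ`. -/
noncomputable def bernFn (n N : ℕ) (α : Fin (n + 1) → ℕ) (x : Fin n → ℝ) : ℝ :=
  ((N.factorial : ℝ) / ∏ j, ((α j).factorial : ℝ)) * ∏ j, bary n x j ^ α j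

/-- Entry `(β, α)` of the one-degree elevation matrix `E^m_{m−1}` (real entries) for
multi-indices over `Fin n`: `(α_j + 1)/m` if `β = α + e_j` for some `j`, `0` otherwise. -/
noncomputable def elevEntryR (n m : ℕ) (β α : Fin n → ℕ) : ℝ :=
  ∑ j, if β = α + Pi.single j 1 then ((α j : ℝ) + 1) / (m : ℝ) else 0

/-- Entry `(β, α)` of the composite elevation matrix
`E^N_{N−i} = E^N_{N−1} E^{N−1}_{N−2} ⋯ E^{N−i+1}_{N−i}` (with `E^N_N` the identity),
for multi-indices over `Fin n` (`β` of weight `N`, `α` of weight `N−i`). -/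
noncomputable def elevComp (n N : ℕ) : ℕ → (Fin n → ℕ) → (Fin n → ℕ) → ℝ
  | 0, β, α => if β = α then 1 else 0
  | i + 1, β, α => ∑ γ ∈ Finset.Nat.antidiagonalTuple n (N - i),
      elevComp n N i β γ * elevEntryR n (N - i) γ α

open Finset

lemma sum_bary (n : ℕ) (x : Fin n → ℝ) : ∑ j, bary n x j = 1 := by
  simp [bary, Fin.sum_univ_castSucc]

lemma continuous_bary (n : ℕ) (j : Fin (n + 1)) : Continuous fun x => bary n x j := by
  induction j using Fin.lastCases with
  | last => simp only [bary, Fin.snoc_last]; fun_prop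
  | cast i => simpa [bary] using continuous_apply i

lemma continuous_bernFn (n N : ℕ) (α : Fin (n + 1) → ℕ) : Continuous (bernFn n N α) :=
  continuous_const.mul (continuous_finsetProd _ fun j _ => (continuous_bary n j).pow _)

lemma isCompact_unitSimplex (n : ℕ) : IsCompact (unitSimplex n) := by
  have hclosed : IsClosed (unitSimplex n) := by
    simp only [unitSimplex, Set.ofPred_and, Set.ofPred_forall]
    exact (isClosed_iInter fun i => isClosed_le continuous_const (continuous_apply i)).inter
        (isClosed_le (continuous_finsetSum _ fun i _ => continuous_apply i) continuous_const)
  refine (isCompact_Icc (a := 0) (b := 1)).of_isClosed_subset hclosed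
    fun x hx => ⟨hx.1, fun i => ?_⟩
  exact (single_le_sum (fun k _ => hx.1 k) (mem_univ i)).trans hx.2

lemma prod_apply_add_single_one {ι M : Type*} [Fintype ι] [DecidableEq ι] [CommMonoid M]
    (f : ι → ℕ → M) (α : ι → ℕ) (j : ι) (c : M) (hc : f j (α j + 1) = c * f j (α j)) :
    ∏ k, f k ((α + Pi.single j 1 : ι → ℕ) k) = c * ∏ k, f k (α k) := by
  have hupd : α + Pi.single j 1 = Function.update α j (α j + 1) := by
    ext k; by_cases hk : k = j <;> simp [hk]
  rw [hupd, ← mul_prod_erase univ _ (mem_univ j), ← mul_prod_erase univ _ (mem_univ j),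
    Function.update_self, hc, mul_assoc]
  congr 2
  exact prod_congr rfl fun k hk => by rw [Function.update_of_ne (ne_of_mem_erase hk)]

lemma bernFn_add_single_one (n m : ℕ) (α : Fin (n + 1) → ℕ) (j : Fin (n + 1)) (x : Fin n → ℝ) :
    ((α j : ℝ) + 1) * bernFn n (m + 1) (α + Pi.single j 1) x
      = (m + 1) * (bernFn n m α x * bary n x j) := by
  have hfact := prod_apply_add_single_one (fun _ a => (a.factorial : ℝ)) α j (α j + 1)
    (by push_cast [Nat.factorial_succ]; ring)
  have hpow := prod_apply_add_single_one (fun k a => bary n x k ^ a) α j (bary n x j)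
    (pow_succ' _ _)
  have hpos : (0 : ℝ) < ∏ k, ((α k).factorial : ℝ) := prod_pos fun k _ => by positivity
  simp only [bernFn, hfact, hpow, Nat.factorial_succ]
  field_simp
  push_cast
  ring

lemma add_single_one_mem_antidiagonalTuple {n m : ℕ} {α : Fin n → ℕ} (hα : ∑ k, α k = m)
    (j : Fin n) : α + Pi.single j 1 ∈ Finset.Nat.antidiagonalTuple n (m + 1) := by
  simp [Finset.Nat.mem_antidiagonalTuple, sum_add_distrib, hα]

lemma bernFn_eq_sum_elevEntryR_mul (n m : ℕ) (α : Fin (n + 1) → ℕ) (hα : ∑ k, α k = m)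
    (x : Fin n → ℝ) :
    bernFn n m α x = ∑ β ∈ Finset.Nat.antidiagonalTuple (n + 1) (m + 1),
      elevEntryR (n + 1) (m + 1) β α * bernFn n (m + 1) β x := by
  have hterm : ∀ j, ((α j : ℝ) + 1) / (m + 1 : ℕ) * bernFn n (m + 1) (α + Pi.single j 1) x
      = bernFn n m α x * bary n x j := by
    intro j
    rw [div_mul_eq_mul_div, bernFn_add_single_one, Nat.cast_succ,
      mul_div_cancel_left₀ _ (by positivity)]
  simp_rw [elevEntryR, sum_mul, ite_mul, zero_mul]
  rw [sum_comm]
  simp_rw [sum_ite_eq' _ (α + Pi.single _ 1), add_single_one_mem_antidiagonalTuple hα, if_true,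
    hterm, ← mul_sum, sum_bary, mul_one]

lemma bernFn_eq_sum_elevComp_mul (n N i : ℕ) (hi : i ≤ N) (α : Fin (n + 1) → ℕ)
    (hα : ∑ k, α k = N - i) (x : Fin n → ℝ) :
    bernFn n (N - i) α x = ∑ γ ∈ Finset.Nat.antidiagonalTuple (n + 1) N,
      elevComp (n + 1) N i γ α * bernFn n N γ x := by
  induction i generalizing α with
  | zero =>
    have hmem : α ∈ Finset.Nat.antidiagonalTuple (n + 1) N :=
      Finset.Nat.mem_antidiagonalTuple.2 hα
    simp [elevComp, hmem]
  | succ i ih =>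
    have hN : N - i = N - (i + 1) + 1 := by omega
    rw [bernFn_eq_sum_elevEntryR_mul n _ α hα, ← hN]
    simp_rw [elevComp, sum_mul]
    rw [sum_comm]
    refine sum_congr rfl fun δ hδ => ?_
    rw [ih (by omega) δ (Finset.Nat.mem_antidiagonalTuple.1 hδ), mul_sum]
    exact sum_congr rfl fun γ _ => by ring

lemma integral_sum_mul_sum {X ι κ : Type*} [MeasurableSpace X] {μ : Measure X}
    (s : Finset ι) (t : Finset κ) (a : ι → ℝ) (b : κ → ℝ) (f : ι → X → ℝ) (g : κ → X → ℝ)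
    (hfg : ∀ γ ∈ s, ∀ δ ∈ t, Integrable (fun x => f γ x * g δ x) μ) :
    ∫ x, (∑ γ ∈ s, a γ * f γ x) * (∑ δ ∈ t, b δ * g δ x) ∂μ
      = ∑ γ ∈ s, ∑ δ ∈ t, a γ * (∫ x, f γ x * g δ x ∂μ) * b δ := by
  have hexpand : ∀ x, (∑ γ ∈ s, a γ * f γ x) * (∑ δ ∈ t, b δ * g δ x)
      = ∑ γ ∈ s, ∑ δ ∈ t, a γ * b δ * (f γ x * g δ x) := fun x => by
    rw [sum_mul_sum]; exact sum_congr rfl fun γ _ => sum_congr rfl fun δ _ => by ring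
  simp_rw [hexpand]
  rw [integral_finsetSum _ fun γ hγ => integrable_finsetSum _ fun δ hδ =>
    (hfg γ hγ δ hδ).const_mul _]
  refine sum_congr rfl fun γ hγ => ?_
  rw [integral_finsetSum _ fun δ hδ => (hfg γ hγ δ hδ).const_mul _]
  exact sum_congr rfl fun δ _ => by rw [integral_const_mul]; ring

theorem stmt7_general (d N i j : ℕ) (hi : i ≤ N) (hj : j ≤ N)
    (α β : Fin (d + 1) → ℕ) (hα : ∑ k, α k = N - i) (hβ : ∑ k, β k = N - j) :
    ∫ x in unitSimplex d, bernFn d (N - i) α x * bernFn d (N - j) β x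
      = ∑ γ ∈ Finset.Nat.antidiagonalTuple (d + 1) N,
          ∑ δ ∈ Finset.Nat.antidiagonalTuple (d + 1) N,
            elevComp (d + 1) N i γ α
              * (∫ x in unitSimplex d, bernFn d N γ x * bernFn d N δ x)
              * elevComp (d + 1) N j δ β := by
  simp_rw [bernFn_eq_sum_elevComp_mul d N i hi α hα, bernFn_eq_sum_elevComp_mul d N j hj β hβ]
  exact integral_sum_mul_sum _ _ _ _ _ _ fun γ _ δ _ =>
    ((continuous_bernFn d N γ).mul (continuous_bernFn d N δ)).continuousOn.integrableOn_compact
      (isCompact_unitSimplex d)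

/-- Degree reduction restricts mass matrices: for `d ≥ 1`, `N ≥ 0`, `0 ≤ i, j ≤ N`, and
multi-indices `α` of weight `N−i`, `β` of weight `N−j`:
`∫_{T_d} b^{N−i}_α b^{N−j}_β dx = ((E^N_{N−i})ᵀ M^N E^N_{N−j})_{α,β}`. -/
theorem stmt7 (d N i j : ℕ) (hd : 1 ≤ d) (hi : i ≤ N) (hj : j ≤ N)
    (α β : Fin (d + 1) → ℕ) (hα : ∑ k, α k = N - i) (hβ : ∑ k, β k = N - j) :
    ∫ x in unitSimplex d, bernFn d (N - i) α x * bernFn d (N - j) β x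
      = ∑ γ ∈ Finset.Nat.antidiagonalTuple (d + 1) N,
          ∑ δ ∈ Finset.Nat.antidiagonalTuple (d + 1) N,
            elevComp (d + 1) N i γ α
              * (∫ x in unitSimplex d, bernFn d N γ x * bernFn d N δ x)
              * elevComp (d + 1) N j δ β :=
  stmt7_general d N i j hi hj α β hα hβ
end

section
/- (Appendix lemma: eigenvalues of L_0.) Let d ≥ 2 and N ≥ 0, and let L_0 := (N+1)² (Ẽ^{N+1}_N)ᵀ Ẽ^{N+1}_N, where the elevation matrices Ẽ are the (d−1)-dimensional ones (multi-indices over Fin d). Then the set of eigenvalues of L_0 equals { (N+1−i)(N+i+d) : 0 ≤ i ≤ N }. -/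
instance multiIndexFintype (n N : ℕ) : Fintype {α : Fin n → ℕ // ∑ j, α j = N} :=
  Fintype.ofFinset (Finset.Nat.antidiagonalTuple n N) fun x => by
    simp [Finset.Nat.mem_antidiagonalTuple]; rfl

/-- The matrix `L_0 := (N+1)² (Ẽ^{N+1}_N)ᵀ Ẽ^{N+1}_N`, where the elevation matrices `Ẽ`
are the `(d−1)`-dimensional ones (multi-indices over `Fin d`, of weight `N`). -/
noncomputable def L0mat (d N : ℕ) :
    Matrix {β : Fin d → ℕ // ∑ j, β j = N} {β : Fin d → ℕ // ∑ j, β j = N} ℚ :=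
  fun β β' => ((N + 1 : ℕ) : ℚ) ^ 2 *
    ∑ γ ∈ Finset.Nat.antidiagonalTuple d (N + 1),
      elevEntry d (N + 1) γ β.1 * elevEntry d (N + 1) γ β'.1

namespace Stmt12Aux

open Matrix
variable {d : ℕ}
abbrev S (d m : ℕ) := {β : Fin d → ℕ // ∑ j, β j = m}
noncomputable def A (d m : ℕ) : Matrix (S d (m+1)) (S d m) ℚ :=
  fun γ β => ∑ j, if γ.1 = β.1 + Pi.single j 1 then ((β.1 j : ℚ) + 1) else 0
lemma wsum (β : Fin d → ℕ) (j0 : Fin d) :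
    ∑ j, (β + (Pi.single j0 1 : Fin d → ℕ)) j = (∑ j, β j) + 1 := by
  simp [Finset.sum_add_distrib, Fintype.sum_pi_single']


lemma sum_collapse {m : ℕ} (x : Fin d → ℕ) (hx : ∑ j, x j = m + 1) (f : S d (m+1) → ℚ) :
    ∑ γ : S d (m+1), (if γ.1 = x then f γ else 0) = f ⟨x, hx⟩ := by
  rw [Finset.sum_eq_single (⟨x, hx⟩ : S d (m+1))]
  · simp
  · intro γ _ hne
    rw [if_neg (fun h => hne (Subtype.ext h))]
  · intro h; exact absurd (Finset.mem_univ _) h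

lemma single_inj {j k : Fin d} (h : (Pi.single j 1 : Fin d → ℕ) = Pi.single k 1) : j = k := by
  by_contra hne
  have := congrFun h j
  simp [Pi.single_apply, hne] at this

lemma AtA_apply (m : ℕ) (β β' : S d m) :
    ((A d m)ᵀ * A d m) β β' =
      ∑ j, ∑ k, if β.1 + Pi.single j 1 = β'.1 + Pi.single k 1
        then ((β.1 j : ℚ) + 1) * ((β'.1 k : ℚ) + 1) else 0 := by
  simp only [Matrix.mul_apply, Matrix.transpose_apply, A, Finset.sum_mul_sum]
  rw [Finset.sum_comm]
  refine Finset.sum_congr rfl fun j _ => ?_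
  rw [Finset.sum_comm]
  refine Finset.sum_congr rfl fun k _ => ?_
  have key : ∀ γ : S d (m+1),
      (if γ.1 = β.1 + Pi.single j 1 then ((β.1 j : ℚ) + 1) else 0) *
      (if γ.1 = β'.1 + Pi.single k 1 then ((β'.1 k : ℚ) + 1) else 0)
      = if γ.1 = β.1 + Pi.single j 1 then
          (if β.1 + Pi.single j 1 = β'.1 + Pi.single k 1
            then ((β.1 j : ℚ) + 1) * ((β'.1 k : ℚ) + 1) else 0) else 0 := by
    intro γ
    by_cases h1 : γ.1 = β.1 + Pi.single j 1 <;>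
      by_cases h2 : γ.1 = β'.1 + Pi.single k 1 <;>
      simp_all
  simp only [key]
  exact sum_collapse _ (by rw [wsum, β.2]) _
lemma AAt_apply (m : ℕ) (γ γ' : S d (m+1)) :
    (A d m * (A d m)ᵀ) γ γ' =
      ∑ j, ∑ k, if (1 ≤ γ.1 j ∧ γ.1 + Pi.single k 1 = γ'.1 + Pi.single j 1)
        then (γ.1 j : ℚ) * (γ'.1 k : ℚ) else 0 := by
  simp only [Matrix.mul_apply, Matrix.transpose_apply, A, Finset.sum_mul_sum]
  rw [Finset.sum_comm]
  refine Finset.sum_congr rfl fun j _ => ?_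
  rw [Finset.sum_comm]
  refine Finset.sum_congr rfl fun k _ => ?_
  have key : ∀ α : S d m,
      (if γ.1 = α.1 + Pi.single j 1 then ((α.1 j : ℚ) + 1) else 0) *
      (if γ'.1 = α.1 + Pi.single k 1 then ((α.1 k : ℚ) + 1) else 0)
      = if (γ.1 = α.1 + Pi.single j 1 ∧ γ'.1 = α.1 + Pi.single k 1)
          then (γ.1 j : ℚ) * (γ'.1 k : ℚ) else 0 := by
    intro α
    by_cases h1 : γ.1 = α.1 + Pi.single j 1 <;>
      by_cases h2 : γ'.1 = α.1 + Pi.single k 1 <;> simp_all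
  simp only [key]
  by_cases hc : 1 ≤ γ.1 j ∧ γ.1 + Pi.single k 1 = γ'.1 + Pi.single j 1
  · obtain ⟨hj, heq⟩ := hc
    have hle : ∀ x, (Pi.single j 1 : Fin d → ℕ) x ≤ γ.1 x := by
      intro x
      by_cases hx : x = j
      · subst hx; simpa using hj
      · simp [Pi.single_eq_of_ne hx]
    set α0 : Fin d → ℕ := fun x => γ.1 x - (Pi.single j 1 : Fin d → ℕ) x with hα0
    have h0 : α0 + Pi.single j 1 = γ.1 := by
      funext x
      have := hle x
      simp only [Pi.add_apply, hα0]
      omega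
    have w0 : ∑ x, α0 x = m := by
      have := wsum α0 j
      rw [h0, γ.2] at this
      omega
    have h0' : γ'.1 = α0 + Pi.single k 1 := by
      have : (α0 + Pi.single k 1) + Pi.single j 1 = γ'.1 + Pi.single j 1 := by
        rw [← heq, ← h0]; abel
      exact (add_right_cancel this).symm
    rw [if_pos ⟨hj, heq⟩]
    rw [Finset.sum_eq_single (⟨α0, w0⟩ : S d m)]
    · rw [if_pos ⟨h0.symm, h0'⟩]
    · intro α _ hne
      refine if_neg fun h => hne (Subtype.ext ?_)
      have : α.1 + Pi.single j 1 = α0 + Pi.single j 1 := by rw [← h.1, h0]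
      exact add_right_cancel this
    · intro h; exact absurd (Finset.mem_univ _) h
  · rw [if_neg hc]
    refine Finset.sum_eq_zero fun α _ => ?_
    refine if_neg fun h => hc ?_
    constructor
    · rw [h.1]; simp
    · rw [h.1, h.2]; abel
lemma comm_eq (m : ℕ) :
    (A d (m+1))ᵀ * A d (m+1) =
      A d m * (A d m)ᵀ + (((2*(m+1)+d : ℕ) : ℚ)) • (1 : Matrix (S d (m+1)) (S d (m+1)) ℚ) := by
  ext γ γ'
  rw [AtA_apply, Matrix.add_apply, Matrix.smul_apply, Matrix.one_apply, AAt_apply]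
  have point : ∀ j k : Fin d,
      (if γ.1 + Pi.single j 1 = γ'.1 + Pi.single k 1
        then ((γ.1 j : ℚ) + 1) * ((γ'.1 k : ℚ) + 1) else 0)
      = (if (1 ≤ γ.1 k ∧ γ.1 + Pi.single j 1 = γ'.1 + Pi.single k 1)
          then (γ.1 k : ℚ) * (γ'.1 j : ℚ) else 0)
        + (if (γ.1 + Pi.single j 1 = γ'.1 + Pi.single k 1 ∧ j = k)
            then (2*(γ.1 j : ℚ)+1) else 0) := by
    intro j k
    by_cases h : γ.1 + Pi.single j 1 = γ'.1 + Pi.single k 1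
    · by_cases hjk : j = k
      · subst hjk
        have hγ : γ.1 = γ'.1 := add_right_cancel h
        have hjj : γ'.1 j = γ.1 j := by rw [hγ]
        rw [if_pos h, if_pos (⟨h, rfl⟩ : _ ∧ j = j)]
        by_cases h1 : 1 ≤ γ.1 j
        · rw [if_pos ⟨h1, h⟩, hjj]; push_cast; ring
        · have h0 : γ.1 j = 0 := by omega
          rw [if_neg (fun hh : 1 ≤ γ.1 j ∧ _ => h1 hh.1), h0, hjj, h0]
          norm_num
      · have hj : γ.1 j + 1 = γ'.1 j := by
          have := congrFun h j
          simpa [Pi.single_apply, hjk] using this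
        have hk : γ.1 k = γ'.1 k + 1 := by
          have := congrFun h k
          simpa [Pi.single_apply, (Ne.symm hjk : ¬ k = j)] using this
        rw [if_pos h, if_pos ⟨(by omega : 1 ≤ γ.1 k), h⟩, if_neg (fun hh => hjk hh.2)]
        rw [show γ'.1 j = γ.1 j + 1 from hj.symm, hk]
        push_cast; ring
    · rw [if_neg h, if_neg (fun hh : _ ∧ j = k => h hh.1), if_neg (fun hh : 1 ≤ γ.1 k ∧ _ => h hh.2)]
      norm_num
  rw [Finset.sum_congr rfl fun j _ => Finset.sum_congr rfl fun k _ => point j k]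
  rw [Finset.sum_congr rfl fun j (_ : j ∈ Finset.univ) => Finset.sum_add_distrib,
    Finset.sum_add_distrib]
  congr 1
  · rw [Finset.sum_comm]
  · have inner : ∀ j k : Fin d,
        (if (γ.1 + Pi.single j 1 = γ'.1 + Pi.single k 1 ∧ j = k)
          then (2*(γ.1 j : ℚ)+1) else 0)
        = if k = j then (if γ.1 = γ'.1 then (2*(γ.1 j : ℚ)+1) else 0) else 0 := by
      intro j k
      by_cases hk : k = j
      · subst hk
        by_cases hγ : γ.1 = γ'.1
        · rw [if_pos (⟨by rw [hγ], rfl⟩ : _ ∧ k = k), if_pos rfl, if_pos hγ]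
        · rw [if_neg (fun hh : _ ∧ k = k => hγ (add_right_cancel hh.1)), if_pos rfl,
            if_neg hγ]
      · rw [if_neg (fun hh : _ ∧ j = k => hk hh.2.symm), if_neg hk]
    simp only [inner]
    rw [Finset.sum_congr rfl fun j (_ : j ∈ Finset.univ) =>
      Finset.sum_ite_eq' Finset.univ j (fun _ => if γ.1 = γ'.1 then (2*(γ.1 j : ℚ)+1) else 0)]
    by_cases hγ : γ.1 = γ'.1
    · have : γ = γ' := Subtype.ext hγ
      rw [if_pos this]
      simp only [hγ, if_pos, Finset.mem_univ, if_true]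
      rw [Finset.sum_add_distrib, ← Finset.mul_sum]
      have hw : ∑ i, ((γ'.1 i : ℚ)) = ((m+1 : ℕ) : ℚ) := by
        rw [← Nat.cast_sum, γ'.2]
      rw [hw]
      simp [Fintype.card_fin]
    · have : ¬ γ = γ' := fun h => hγ (congrArg Subtype.val h)
      rw [if_neg this]
      simp [hγ]
lemma mem_spectrum_iff {n : Type*} [Fintype n] [DecidableEq n] (M : Matrix n n ℚ) (r : ℚ) :
    r ∈ spectrum ℚ M ↔ ∃ v : n → ℚ, v ≠ 0 ∧ M.mulVec v = r • v := by
  rw [spectrum.mem_iff, Matrix.isUnit_iff_isUnit_det, isUnit_iff_ne_zero, not_not,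
    ← Matrix.exists_mulVec_eq_zero_iff]
  constructor
  · rintro ⟨v, hv, hv0⟩
    refine ⟨v, hv, ?_⟩
    have : (algebraMap ℚ (Matrix n n ℚ) r - M).mulVec v
        = r • v - M.mulVec v := by
      rw [Matrix.sub_mulVec, Algebra.algebraMap_eq_smul_one, Matrix.smul_mulVec,
        Matrix.one_mulVec]
    rw [this] at hv0
    exact (sub_eq_zero.mp hv0).symm
  · rintro ⟨v, hv, hv0⟩
    refine ⟨v, hv, ?_⟩
    rw [Matrix.sub_mulVec, Algebra.algebraMap_eq_smul_one, Matrix.smul_mulVec,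
      Matrix.one_mulVec, hv0, sub_self]

lemma card_lt (d m : ℕ) (hd : 2 ≤ d) :
    Fintype.card (S d m) < Fintype.card (S d (m+1)) := by
  have h01 : (⟨0, by omega⟩ : Fin d) ≠ ⟨1, by omega⟩ := by
    intro h; simpa using congrArg Fin.val h
  set f : S d m → S d (m+1) := fun β =>
    ⟨β.1 + Pi.single (⟨0, by omega⟩ : Fin d) 1, by rw [wsum, β.2]⟩ with hf
  have hinj : Function.Injective f := by
    intro β β' h
    exact Subtype.ext (add_right_cancel (congrArg Subtype.val h))
  have hb : (⟨Pi.single (⟨1, by omega⟩ : Fin d) (m+1),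
      by simp [Fintype.sum_pi_single']⟩ : S d (m+1)) ∉ Set.range f := by
    rintro ⟨β, hβ⟩
    have := congrFun (congrArg Subtype.val hβ) ⟨0, by omega⟩
    simp only [hf, Pi.add_apply, Pi.single_eq_same, Pi.single_eq_of_ne h01] at this
    omega
  exact Fintype.card_lt_of_injective_of_notMem f hinj hb

lemma exists_ker (d m : ℕ) (hd : 2 ≤ d) :
    ∃ w : S d (m+1) → ℚ, w ≠ 0 ∧ (A d m)ᵀ.mulVec w = 0 := by
  by_contra hcon
  push_neg at hcon
  have hinj : Function.Injective ((A d m)ᵀ.mulVecLin) := by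
    rw [← LinearMap.ker_eq_bot, LinearMap.ker_eq_bot']
    intro w hw
    by_contra hw0
    exact hcon w hw0 (by rwa [Matrix.mulVecLin_apply] at hw)
  have hle := LinearMap.finrank_le_finrank_of_injective hinj
  rw [Module.finrank_pi, Module.finrank_pi] at hle
  exact absurd hle (not_le.mpr (card_lt d m hd))

lemma elev_eq (d N : ℕ) (γ β : Fin d → ℕ) :
    elevEntry d (N+1) γ β
      = (∑ j, if γ = β + Pi.single j 1 then ((β j : ℚ) + 1) else 0) / ((N+1 : ℕ) : ℚ) := by
  rw [elevEntry, Finset.sum_div]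
  refine Finset.sum_congr rfl fun j _ => ?_
  split_ifs <;> simp

lemma L0_eq (d N : ℕ) : L0mat d N = (A d N)ᵀ * A d N := by
  ext β β'
  rw [L0mat, Matrix.mul_apply]
  rw [Finset.sum_subtype (Finset.Nat.antidiagonalTuple d (N+1))
    (fun x => Finset.Nat.mem_antidiagonalTuple)
    (fun γ => elevEntry d (N+1) γ β.1 * elevEntry d (N+1) γ β'.1)]
  rw [Finset.mul_sum]
  refine Finset.sum_congr rfl fun γ _ => ?_
  rw [Matrix.transpose_apply, elev_eq, elev_eq]
  have hc : ((N+1:ℕ):ℚ) ≠ 0 := Nat.cast_ne_zero.mpr (Nat.succ_ne_zero N)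
  show _ = A d N γ β * A d N γ β'
  simp only [A]
  field_simp

lemma base_eq (d : ℕ) :
    (A d 0)ᵀ * A d 0 = ((d:ℕ):ℚ) • (1 : Matrix (S d 0) (S d 0) ℚ) := by
  ext β β'
  have hβ : ∀ x, β.1 x = 0 := by
    intro x
    exact Finset.sum_eq_zero_iff.mp β.2 x (Finset.mem_univ x)
  have hβ' : ∀ x, β'.1 x = 0 := by
    intro x
    exact Finset.sum_eq_zero_iff.mp β'.2 x (Finset.mem_univ x)
  have hbb : β = β' := Subtype.ext (funext fun x => by rw [hβ x, hβ' x])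
  rw [AtA_apply, Matrix.smul_apply, Matrix.one_apply, if_pos hbb]
  have term : ∀ j k : Fin d,
      (if β.1 + Pi.single j 1 = β'.1 + Pi.single k 1
        then ((β.1 j : ℚ) + 1) * ((β'.1 k : ℚ) + 1) else 0)
      = if j = k then 1 else 0 := by
    intro j k
    by_cases hjk : j = k
    · subst hjk
      rw [if_pos (show β.1 + Pi.single j 1 = β'.1 + Pi.single j 1 by rw [hbb]),
        if_pos rfl, hβ j, hβ' j]
      norm_num
    · rw [if_neg (fun h => hjk (single_inj (add_left_cancel
        (show β.1 + Pi.single j 1 = β.1 + Pi.single k 1 by rw [h, ← hbb])))), if_neg hjk]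
  rw [Finset.sum_congr rfl fun j _ => Finset.sum_congr rfl fun k _ => term j k]
  simp [Finset.sum_ite_eq, smul_eq_mul]

lemma shift_id (d N i : ℕ) (hi : i ≤ N) :
    ((N+1-i:ℕ):ℚ)*((N+i+d:ℕ):ℚ) + ((2*(N+1)+d:ℕ):ℚ)
      = ((N+1+1-i:ℕ):ℚ)*((N+1+i+d:ℕ):ℚ) := by
  rw [Nat.cast_sub (by omega), Nat.cast_sub (by omega)]
  push_cast
  ring

lemma eig_ne (d N i : ℕ) (hi : i ≤ N) (hd : 2 ≤ d) :
    ((N+1-i:ℕ):ℚ)*((N+i+d:ℕ):ℚ) ≠ 0 :=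
  mul_ne_zero (Nat.cast_ne_zero.mpr (by omega)) (Nat.cast_ne_zero.mpr (by omega))

end Stmt12Aux

open Stmt12Aux Matrix

/-- (Appendix lemma: eigenvalues of `L_0`.)  For `d ≥ 2` and `N ≥ 0`, the set of
eigenvalues of `L_0 = (N+1)² (Ẽ^{N+1}_N)ᵀ Ẽ^{N+1}_N` equals
`{ (N+1−i)(N+i+d) : 0 ≤ i ≤ N }`. -/
theorem stmt12 (d N : ℕ) (hd : 2 ≤ d) :
    spectrum ℚ (L0mat d N)
      = {r : ℚ | ∃ i : ℕ, i ≤ N ∧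
          r = ((N + 1 - i : ℕ) : ℚ) * ((N + i + d : ℕ) : ℚ)} := by
  induction N with
  | zero =>
    ext r
    rw [Set.mem_setOf_eq, L0_eq, base_eq, mem_spectrum_iff]
    constructor
    · rintro ⟨v, hv, hMv⟩
      obtain ⟨x, hx⟩ := Function.ne_iff.mp hv
      have h1 := congrFun hMv x
      rw [Matrix.smul_mulVec, Matrix.one_mulVec] at h1
      have h2 : ((d:ℕ):ℚ) * v x = r * v x := by
        simpa [smul_eq_mul] using h1
      have hr : r = ((d:ℕ):ℚ) := (mul_right_cancel₀ hx h2).symm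
      refine ⟨0, le_refl 0, ?_⟩
      rw [hr]
      norm_num
    · rintro ⟨i, hi, hval⟩
      have hi0 : i = 0 := by omega
      subst hi0
      have hne : Nonempty (S d 0) := ⟨⟨fun _ => 0, by simp⟩⟩
      refine ⟨fun _ => 1, fun h => one_ne_zero (congrFun h hne.some), ?_⟩
      rw [Matrix.smul_mulVec, Matrix.one_mulVec, hval]
      norm_num
  | succ N IH =>
    ext r
    rw [Set.mem_setOf_eq, L0_eq, mem_spectrum_iff]
    have key : ∀ v : S d (N+1) → ℚ, ((A d (N+1))ᵀ * A d (N+1)).mulVec v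
        = (A d N * (A d N)ᵀ).mulVec v + (((2*(N+1)+d : ℕ):ℚ)) • v := by
      intro v
      rw [comm_eq, Matrix.add_mulVec, Matrix.smul_mulVec, Matrix.one_mulVec]
    constructor
    · rintro ⟨v, hv, hMv⟩
      have hH : (A d N * (A d N)ᵀ).mulVec v = (r - ((2*(N+1)+d : ℕ):ℚ)) • v := by
        have h2 := key v
        rw [hMv] at h2
        rw [sub_smul]
        exact eq_sub_iff_add_eq.mpr h2.symm
      by_cases hu : (A d N)ᵀ.mulVec v = 0
      · have h0 : (r - ((2*(N+1)+d : ℕ):ℚ)) • v = 0 := by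
          rw [← hH, ← Matrix.mulVec_mulVec, hu, Matrix.mulVec_zero]
        have hrc : r = ((2*(N+1)+d : ℕ):ℚ) := by
          rcases smul_eq_zero.mp h0 with h | h
          · linarith [sub_eq_zero.mp h]
          · exact absurd h hv
        refine ⟨N+1, le_refl _, ?_⟩
        rw [hrc, show N+1+1-(N+1) = 1 from by omega]
        push_cast
        ring
      · have hGu : ((A d N)ᵀ * A d N).mulVec ((A d N)ᵀ.mulVec v)
            = (r - ((2*(N+1)+d : ℕ):ℚ)) • ((A d N)ᵀ.mulVec v) := by
          rw [← Matrix.mulVec_mulVec, Matrix.mulVec_mulVec v (A d N) (A d N)ᵀ, hH,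
            Matrix.mulVec_smul]
        have hsp : (r - ((2*(N+1)+d : ℕ):ℚ)) ∈ spectrum ℚ (L0mat d N) := by
          rw [L0_eq, mem_spectrum_iff]
          exact ⟨_, hu, hGu⟩
        rw [IH] at hsp
        obtain ⟨i, hi, hval⟩ := hsp
        refine ⟨i, by omega, ?_⟩
        rw [show r = (r - ((2*(N+1)+d : ℕ):ℚ)) + ((2*(N+1)+d : ℕ):ℚ) from by ring, hval,
          shift_id d N i hi]
    · rintro ⟨i, hi, hval⟩
      by_cases hiN : i ≤ N
      · have hsp : ((N+1-i:ℕ):ℚ) * ((N+i+d:ℕ):ℚ) ∈ spectrum ℚ (L0mat d N) := by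
          rw [IH]
          exact ⟨i, hiN, rfl⟩
        rw [L0_eq, mem_spectrum_iff] at hsp
        obtain ⟨v, hv, hGv⟩ := hsp
        have hwne : (A d N).mulVec v ≠ 0 := by
          intro h0
          rw [← Matrix.mulVec_mulVec, h0, Matrix.mulVec_zero] at hGv
          rcases smul_eq_zero.mp hGv.symm with h | h
          · exact eig_ne d N i hiN hd h
          · exact hv h
        refine ⟨(A d N).mulVec v, hwne, ?_⟩
        rw [key]
        have hfirst : (A d N * (A d N)ᵀ).mulVec ((A d N).mulVec v)
            = (((N+1-i:ℕ):ℚ) * ((N+i+d:ℕ):ℚ)) • ((A d N).mulVec v) := by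
          rw [← Matrix.mulVec_mulVec, Matrix.mulVec_mulVec v (A d N)ᵀ (A d N), hGv,
            Matrix.mulVec_smul]
        rw [hfirst, ← add_smul, shift_id d N i hiN, hval]
      · have hi1 : i = N+1 := by omega
        obtain ⟨w, hw, hker⟩ := exists_ker d N hd
        refine ⟨w, hw, ?_⟩
        rw [key, ← Matrix.mulVec_mulVec, hker, Matrix.mulVec_zero, zero_add]
        rw [hval, hi1, show N+1+1-(N+1) = 1 from by omega]
        congr 1
        push_cast
        ring
end
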